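/- arXiv:1611.05944 — 2 statements merged into one kernel-verified Lean document; each statement's English description precedes it below -/
import Mathlib

section
/- For any linear map L on ℚ^d (or any finite-dimensional vector space) and subspaces V, W, one has rank(L(V)) ≥ rank(L(V ∩ W)) + rank(L(V + W)) − rank(L(W)). -/
theorem Submodule.finrank_map_inf_add_finrank_map_sup_le {K E F : Type*} [DivisionRing K]
    [AddCommGroup E] [Module K E] [AddCommGroup F] [Module K F] [FiniteDimensional K E]
    (L : E →ₗ[K] F) (V W : Submodule K E) :
    Module.finrank K ((V ⊓ W).map L) + Module.finrank K ((V ⊔ W).map L) ≤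
      Module.finrank K (V.map L) + Module.finrank K (W.map L) := by
  rw [Submodule.map_sup, ← Submodule.finrank_sup_add_finrank_inf_eq (V.map L) (W.map L),
    add_comm]
  gcongr
  exact Submodule.finrank_mono (Submodule.map_inf_le L)

theorem stmt_0 {K : Type*} [Field K] {E F : Type*} [AddCommGroup E] [Module K E]
    [AddCommGroup F] [Module K F] [FiniteDimensional K E]
    (L : E →ₗ[K] F) (V W : Submodule K E) :
    (Module.finrank K (V.map L) : ℤ) ≥
      (Module.finrank K ((V ⊓ W).map L) : ℤ) +
      (Module.finrank K ((V ⊔ W).map L) : ℤ) -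
      (Module.finrank K (W.map L) : ℤ) := by
  have hrank := Submodule.finrank_map_inf_add_finrank_map_sup_le L V W
  omega
end

section
/- Let k ≥ 2 and let φ₁,…,φ_k : ℚ^d → ℚ^{d−1} be linear maps each of rank d−1 whose kernels are lines ℓ₁,…,ℓ_k that are linearly independent (their sum has dimension k). Then for every subspace T of ℚ^d of dimension l, Σᵢ (1/(k−1))·dim(φᵢ(T)) ≥ l. -/
/-!
Rank–nullity on `T` gives `dim φᵢ(T) = l - dim (T ⊓ ℓᵢ)`, and `dim (T ⊓ ℓᵢ)` is `1` or `0` according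
to whether the line `ℓᵢ` lies in `T`. If `S` is the set of lines contained in `T`, then all `k` lines
lie in `T ⊔ ⨆_{i ∉ S} ℓᵢ`, whose dimension is at most `l + (k - |S|)`; independence of the lines
thus forces `|S| ≤ l`, and summing gives `∑ᵢ dim φᵢ(T) = k l - |S| ≥ (k - 1) l`.
-/

open Module Submodule Finset

namespace Submodule

variable {K V W ι : Type*} [DivisionRing K] [AddCommGroup V] [Module K V] [FiniteDimensional K V]

theorem finrank_biSup_le_sum (s : Finset ι) (f : ι → Submodule K V) :
    finrank K ↥(⨆ i ∈ s, f i) ≤ ∑ i ∈ s, finrank K (f i) := by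
  classical
  induction s using Finset.induction_on with
  | empty => simp
  | insert a s ha ih =>
    rw [sum_insert ha, Finset.iSup_insert]
    exact (finrank_add_le_finrank_add_finrank _ _).trans (Nat.add_le_add_left ih _)

theorem finrank_inf_le_ite {L : Submodule K V} (hL : finrank K L ≤ 1) (T : Submodule K V)
    [Decidable (L ≤ T)] : finrank K ↥(T ⊓ L) ≤ if L ≤ T then 1 else 0 := by
  split_ifs with h
  · exact (finrank_mono inf_le_right).trans hL
  · have hlt : T ⊓ L < L := inf_le_right.lt_of_ne fun he => h (he ▸ inf_le_left)
    have := finrank_lt_finrank_of_lt hlt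
    omega

variable [Fintype ι] {L : ι → Submodule K V}

theorem card_filter_le_finrank (hL : ∀ i, finrank K (L i) ≤ 1)
    (hindep : finrank K ↥(⨆ i, L i) = Fintype.card ι) (T : Submodule K V)
    [DecidablePred fun i => L i ≤ T] :
    #{i | L i ≤ T} ≤ finrank K T := by
  classical
  set S : Finset ι := {i | L i ≤ T}
  have hcover : ⨆ i, L i ≤ T ⊔ ⨆ i ∈ Sᶜ, L i := by
    refine iSup_le fun i => ?_
    by_cases hi : L i ≤ T
    · exact hi.trans le_sup_left
    · exact (le_biSup L (by simpa [S] using hi)).trans le_sup_right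
  have hrest : finrank K ↥(⨆ i ∈ Sᶜ, L i) ≤ #Sᶜ :=
    (finrank_biSup_le_sum _ _).trans (by simpa using sum_le_sum fun i _ => hL i)
  have hdim : Fintype.card ι ≤ finrank K T + #Sᶜ := by
    rw [← hindep]
    exact (finrank_mono hcover).trans
      ((finrank_add_le_finrank_add_finrank _ _).trans (Nat.add_le_add_left hrest _))
  have hcard : #S + #Sᶜ = Fintype.card ι := card_add_card_compl S
  omega

theorem sum_finrank_inf_le_finrank (hL : ∀ i, finrank K (L i) ≤ 1)
    (hindep : finrank K ↥(⨆ i, L i) = Fintype.card ι) (T : Submodule K V) :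
    ∑ i, finrank K ↥(T ⊓ L i) ≤ finrank K T := by
  classical
  calc ∑ i, finrank K ↥(T ⊓ L i) ≤ ∑ i, if L i ≤ T then 1 else 0 :=
        sum_le_sum fun i _ => finrank_inf_le_ite (hL i) T
    _ = #{i | L i ≤ T} := by rw [sum_boole, Nat.cast_id]
    _ ≤ finrank K T := card_filter_le_finrank hL hindep T

variable [AddCommGroup W] [Module K W]

theorem finrank_map_add_finrank_inf_ker (f : V →ₗ[K] W) (T : Submodule K V) :
    finrank K ↥(T.map f) + finrank K ↥(T ⊓ LinearMap.ker f) = finrank K T := by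
  have h := LinearMap.finrank_range_add_finrank_ker (f.domRestrict T)
  rwa [LinearMap.range_domRestrict, LinearMap.ker_domRestrict, ← finrank_map_subtype_eq T,
    map_comap_subtype] at h

theorem sub_one_mul_finrank_le_sum_finrank_map {f : ι → V →ₗ[K] W}
    (hker : ∀ i, finrank K (LinearMap.ker (f i)) ≤ 1)
    (hindep : finrank K ↥(⨆ i, LinearMap.ker (f i)) = Fintype.card ι) (T : Submodule K V) :
    (Fintype.card ι - 1) * finrank K T ≤ ∑ i, finrank K ↥(T.map (f i)) := by
  have hsum : ∑ i, finrank K ↥(T.map (f i)) + ∑ i, finrank K ↥(T ⊓ LinearMap.ker (f i)) =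
      Fintype.card ι * finrank K T := by
    simp [← sum_add_distrib, finrank_map_add_finrank_inf_ker]
  have hinf := sum_finrank_inf_le_finrank hker hindep T
  rw [Nat.sub_one_mul]
  omega

end Submodule

theorem stmt_14_general (d k : ℕ) (hk : 2 ≤ k)
    (φ : Fin k → ((Fin d → ℚ) →ₗ[ℚ] (Fin (d - 1) → ℚ)))
    (hker : ∀ i, Module.finrank ℚ (LinearMap.ker (φ i)) = 1)
    (hindep : Module.finrank ℚ (⨆ i, LinearMap.ker (φ i) : Submodule ℚ (Fin d → ℚ)) = k)
    (T : Submodule ℚ (Fin d → ℚ)) (l : ℕ) (hT : Module.finrank ℚ T = l) :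
    (l : ℚ) ≤ ∑ i, (1 / ((k : ℚ) - 1)) * (Module.finrank ℚ (T.map (φ i)) : ℚ) := by
  have hnat : (k - 1) * l ≤ ∑ i, finrank ℚ ↥(T.map (φ i)) := by
    simpa [hT] using sub_one_mul_finrank_le_sum_finrank_map (fun i => (hker i).le)
      (by rwa [Fintype.card_fin]) T
  have hcast : ((k - 1 : ℕ) : ℚ) = (k : ℚ) - 1 := by
    rw [Nat.cast_sub (by omega), Nat.cast_one]
  have hpos : (0 : ℚ) < (k : ℚ) - 1 := by
    rw [← hcast]
    exact_mod_cast (by omega : 0 < k - 1)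
  rw [← mul_sum, one_div_mul_eq_div, le_div_iff₀ hpos, mul_comm, ← hcast]
  exact_mod_cast hnat

theorem stmt_14 (d k : ℕ) (hk : 2 ≤ k)
    (φ : Fin k → ((Fin d → ℚ) →ₗ[ℚ] (Fin (d - 1) → ℚ)))
    (hrank : ∀ i, Module.finrank ℚ (LinearMap.range (φ i)) = d - 1)
    (hker : ∀ i, Module.finrank ℚ (LinearMap.ker (φ i)) = 1)
    (hindep : Module.finrank ℚ (⨆ i, LinearMap.ker (φ i) : Submodule ℚ (Fin d → ℚ)) = k)
    (T : Submodule ℚ (Fin d → ℚ)) (l : ℕ) (hT : Module.finrank ℚ T = l) :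
    (l : ℚ) ≤ ∑ i, (1 / ((k : ℚ) - 1)) * (Module.finrank ℚ (T.map (φ i)) : ℚ) :=
  stmt_14_general d k hk φ hker hindep T l hT
end
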